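/- arXiv:1308.4290 — 8 statements merged into one kernel-verified Lean document; each statement's English description precedes it below -/
import Mathlib

section
/- In a right loop (S, o) with identity e, if f(x', x) = id for all x in S (where x' is the left inverse of x and f(y,z) is the right inner mapping defined by f(y,z)(x) o (y o z) = (x o y) o z), then every element x of S has a unique two-sided inverse, i.e., x' o x = e and x o x' = e. -/
/-- A right loop: identity `e` and bijective right translations. -/
structure RightLoop (S : Type*) where
  op : S → S → S
  e : S
  op_e : ∀ x, op x e = x
  e_op : ∀ x, op e x = x
  bij : ∀ a, Function.Bijective (fun x => op x a)

namespace RightLoop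

variable {S : Type*} (L : RightLoop S)

theorem op_right_cancel {a b c : S} (h : L.op a c = L.op b c) : a = b :=
  (L.bij c).1 h

theorem eq_e_of_op_eq_right {a c : S} (h : L.op a c = c) : a = L.e :=
  L.op_right_cancel (h.trans (L.e_op c).symm)

theorem op_op_eq_of_innerMap_eq_id {f : S → S → S → S} {y z : S}
    (hf : ∀ x, L.op (f y z x) (L.op y z) = L.op (L.op x y) z)
    (hid : ∀ x, f y z x = x) (hyz : L.op y z = L.e) (w : S) :
    L.op (L.op w y) z = w := by
  rw [← hf w, hid, hyz, L.op_e]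

end RightLoop

theorem unique_two_sided_inverses {S : Type*} (L : RightLoop S)
    (inv : S → S) (hinv : ∀ x, L.op (inv x) x = L.e)
    (f : S → S → S → S)
    (hf : ∀ y z x, L.op (f y z x) (L.op y z) = L.op (L.op x y) z)
    (hff : ∀ x w, f (inv x) x w = w) :
    ∀ x : S, L.op (inv x) x = L.e ∧ L.op x (inv x) = L.e ∧
      ∀ y : S, L.op y x = L.e → L.op x y = L.e → y = inv x := by
  intro x
  have hcancel := L.op_op_eq_of_innerMap_eq_id (hf (inv x) x) (hff x) (hinv x)
  refine ⟨hinv x, L.eq_e_of_op_eq_right (hcancel x), fun y hyx _ => ?_⟩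
  exact L.op_right_cancel (hyx.trans (hinv x).symm)
end

section
/- In a right loop (S, o) with identity e, if f(x', x) = id for all x in S, then also f(x, x') = id for all x in S. -/
namespace RightLoop

variable {S : Type*} (L : RightLoop S)

theorem inner_map_eq_id_iff {f : S → S → S → S}
    (hf : ∀ y z x, L.op (f y z x) (L.op y z) = L.op (L.op x y) z) (y z : S) :
    (∀ w, f y z w = w) ↔ ∀ w, L.op (L.op w y) z = L.op w (L.op y z) := by
  constructor
  · intro hid w
    rw [← hf, hid]
  · intro hassoc w
    exact L.op_right_cancel (by rw [hf, hassoc])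

theorem op_op_eq_self_symm {y z : S} (h : ∀ w, L.op (L.op w y) z = w) (w : S) :
    L.op (L.op w z) y = w :=
  L.op_right_cancel (h (L.op w z))

end RightLoop

theorem f_x_xinv_eq_id {S : Type*} (L : RightLoop S)
    (inv : S → S) (hinv : ∀ x, L.op (inv x) x = L.e)
    (f : S → S → S → S)
    (hf : ∀ y z x, L.op (f y z x) (L.op y z) = L.op (L.op x y) z)
    (hff : ∀ x w, f (inv x) x w = w) :
    ∀ x w : S, f x (inv x) w = w := by
  intro x
  have hinv_left : ∀ w, L.op (L.op w (inv x)) x = w := fun w => by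
    rw [(L.inner_map_eq_id_iff hf _ _).1 (hff x), hinv, L.op_e]
  have hinv_right : ∀ w, L.op (L.op w x) (inv x) = w := L.op_op_eq_self_symm hinv_left
  have hx_inv : L.op x (inv x) = L.e := by
    simpa only [L.e_op] using hinv_right L.e
  refine (L.inner_map_eq_id_iff hf x (inv x)).2 fun w => ?_
  rw [hinv_right, hx_inv, L.op_e]
end

section
/- Let (S, o) be a right loop with unique inverses (x' o x = e = x o x' for each x). Then the set TAut(S, o) of twisted automorphisms of S forms a group under composition of maps. -/
/-- `h` is a twisted automorphism of the right loop `(S, o)` with inverse map `inv`. -/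
def IsTAut {S : Type*} (L : RightLoop S) (inv : S → S) (h : Equiv.Perm S) : Prop :=
  ∀ x y : S, y ≠ L.e → h (L.op x y) = L.op (inv (h (inv x))) (h y)

/-! The twisted-automorphism identity `h (x ∘ y) = (h x')' ∘ h y` is preserved by composition and
inversion once one knows `x'' = x` and `h e = e`. The first follows from cancelling `x'` on the
right in `x'' ∘ x' = e = x ∘ x'`; the second from taking `x = y'` in the identity, which gives
`h e = (h y)' ∘ h y = e` (any `y ≠ e` will do, and if there is none, `S = {e}`). -/

section

variable {S : Type*} (L : RightLoop S) {i : S → S}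
  (hinv : ∀ x, L.op (i x) x = L.e ∧ L.op x (i x) = L.e)
include hinv

theorem RightLoop.inv_inv_of_op_inv (x : S) : i (i x) = x :=
  (L.bij (i x)).1 ((hinv (i x)).1.trans (hinv x).2.symm)

theorem IsTAut.apply_e {h : Equiv.Perm S} (hh : IsTAut L i h) : h L.e = L.e := by
  by_cases hS : ∃ y, y ≠ L.e
  · obtain ⟨y, hy⟩ := hS
    have key := hh (i y) y hy
    rw [(hinv y).1, L.inv_inv_of_op_inv hinv] at key
    rw [key, (hinv (h y)).1]
  · exact not_exists_not.mp hS _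

theorem isTAut_one : IsTAut L i 1 := by
  intro x y _
  simp only [Equiv.Perm.one_apply, L.inv_inv_of_op_inv hinv]

theorem IsTAut.mul {a b : Equiv.Perm S} (ha : IsTAut L i a) (hb : IsTAut L i b) :
    IsTAut L i (a * b) := by
  intro x y hy
  have hby : b y ≠ L.e := fun h => hy (b.injective (h.trans (hb.apply_e L hinv).symm))
  simp only [Equiv.Perm.mul_apply]
  rw [hb x y hy, ha _ (b y) hby, L.inv_inv_of_op_inv hinv]

theorem IsTAut.inv {a : Equiv.Perm S} (ha : IsTAut L i a) : IsTAut L i a⁻¹ := by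
  intro x y hy
  have hy' : a⁻¹ y ≠ L.e := fun h => hy (by
    rw [← ha.apply_e L hinv]
    exact Equiv.Perm.inv_eq_iff_eq.mp h)
  rw [Equiv.Perm.inv_eq_iff_eq, ha _ _ hy']
  simp only [L.inv_inv_of_op_inv hinv, Equiv.Perm.coe_inv, Equiv.apply_symm_apply]

def RightLoop.tautSubgroup : Subgroup (Equiv.Perm S) where
  carrier := {h | IsTAut L i h}
  one_mem' := isTAut_one L hinv
  mul_mem' := fun ha hb => ha.mul L hinv hb
  inv_mem' := fun ha => ha.inv L hinv

end

/-- The twisted automorphisms of a right loop with unique inverses form a group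
under composition, i.e. they are (the carrier of) a subgroup of `Equiv.Perm S`. -/
theorem taut_is_group {S : Type*} (L : RightLoop S) (inv : S → S)
    (hinv : ∀ x, L.op (inv x) x = L.e ∧ L.op x (inv x) = L.e) :
    ∃ G : Subgroup (Equiv.Perm S), ∀ h : Equiv.Perm S, h ∈ G ↔ IsTAut L inv h :=
  ⟨L.tautSubgroup hinv, fun _ => Iff.rfl⟩
end

section
/- Every twisted automorphism of a group G is an automorphism of G. -/
/-!
Writing `y` as `x⁻¹ * (x * y)`, the twisted identity with the roles reversed gives
`h (x * y) = h x * h y` whenever `x * y ≠ 1`. It remains to see `h x * h x⁻¹ = 1`: a third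
element `z ∉ {1, x}` lets one split `h z` as `h x * h (x⁻¹ * z) = h x * h x⁻¹ * h z`, and
without one the group has at most two elements, so every element squares to `1`.
-/

namespace TwistedHom

lemma mul_self_eq_one_of_forall_eq_one_or_eq {G : Type*} [Group G] {a : G}
    (hG : ∀ z : G, z = 1 ∨ z = a) (g : G) : g * g = 1 := by
  have haa : a * a = 1 := by
    rcases hG (a * a) with h | h
    · exact h
    · rw [mul_eq_left.mp h, mul_one]
  rcases hG g with rfl | rfl
  · exact mul_one 1
  · exact haa

variable {G : Type*} [Group G] {f : G → G}
  (hf : ∀ x y : G, y ≠ 1 → f (x * y) = (f x⁻¹)⁻¹ * f y)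
include hf

lemma map_one : f 1 = 1 := by
  by_cases hG : ∃ a : G, a ≠ 1
  · obtain ⟨a, ha⟩ := hG
    have h := hf 1 a ha
    rw [one_mul, inv_one, right_eq_mul, inv_eq_one] at h
    exact h
  · push Not at hG
    exact hG _

lemma map_mul_of_mul_ne_one {x y : G} (hxy : x * y ≠ 1) : f (x * y) = f x * f y := by
  have h := hf x⁻¹ (x * y) hxy
  rw [inv_inv, inv_mul_cancel_left] at h
  rw [h, mul_inv_cancel_left]

lemma map_mul_map_inv (x : G) : f x * f x⁻¹ = 1 := by
  by_cases hG : ∃ z : G, z ≠ 1 ∧ z ≠ x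
  · obtain ⟨z, hz1, hzx⟩ := hG
    have hsplit : f z = f x * f (x⁻¹ * z) := by
      rw [← map_mul_of_mul_ne_one hf (by rwa [mul_inv_cancel_left]), mul_inv_cancel_left]
    have hsplit' : f (x⁻¹ * z) = f x⁻¹ * f z :=
      map_mul_of_mul_ne_one hf (by rwa [Ne, inv_mul_eq_one, eq_comm])
    rw [hsplit', ← mul_assoc, right_eq_mul] at hsplit
    exact hsplit
  · push Not at hG
    have hsq := mul_self_eq_one_of_forall_eq_one_or_eq (a := x)
      fun z => or_iff_not_imp_left.mpr (hG z)
    rw [inv_eq_of_mul_eq_one_right (hsq x)]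
    exact hsq (f x)

theorem map_mul (x y : G) : f (x * y) = f x * f y := by
  by_cases hxy : x * y = 1
  · rw [hxy, map_one hf, eq_inv_of_mul_eq_one_right hxy, map_mul_map_inv hf]
  · exact map_mul_of_mul_ne_one hf hxy

end TwistedHom

/-- Every twisted automorphism of a group is an automorphism. -/
theorem group_taut_is_aut {G : Type*} [Group G] (h : Equiv.Perm G)
    (hT : ∀ x y : G, y ≠ 1 → h (x * y) = (h x⁻¹)⁻¹ * h y) :
    ∀ x y : G, h (x * y) = h x * h y :=
  TwistedHom.map_mul hT
end

section
/- Let (S, o) be a right loop whose inner mapping group G_S acts transitively on S \ {e}, and suppose the map σ_y: G_S → G_S defined by σ_y(h)(x) o h(y) = h(x o y) is a group homomorphism for some fixed y ∈ S \ {e}. Then σ_x = σ_y for every x ∈ S \ {e}. -/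
/-- The inner mapping group: the subgroup of `Equiv.Perm S` generated by the
right inner mappings `f y z`. -/
def innerGroup {S : Type*} (f : S → S → Equiv.Perm S) : Subgroup (Equiv.Perm S) :=
  Subgroup.closure (Set.range (fun p : S × S => f p.1 p.2))

/-- The cocycle identity `σ_y(hk) = σ_y(h) σ_{h(y)}(k)` for left-to-right composition; in
`Equiv.Perm`, where `h * k` applies `k` first, it takes this mirrored form. -/
theorem RightLoop.sigma_mul {S : Type*} (L : RightLoop S)
    (σ : S → Equiv.Perm S → Equiv.Perm S)
    (hσ : ∀ y h x, L.op (σ y h x) (h y) = h (L.op x y))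
    (y : S) (h k : Equiv.Perm S) : σ y (h * k) = σ (k y) h * σ y k := by
  ext x
  apply (L.bij ((h * k) y)).1
  change L.op (σ y (h * k) x) ((h * k) y) = L.op (σ (k y) h (σ y k x)) (h (k y))
  rw [hσ, hσ (k y) h, hσ y k]
  rfl

theorem sigma_const_general {S : Type*} (L : RightLoop S)
    (f : S → S → Equiv.Perm S)
    (σ : S → Equiv.Perm S → Equiv.Perm S)
    (hσ : ∀ y h x, L.op (σ y h x) (h y) = h (L.op x y))
    (htrans : ∀ a b : S, a ≠ L.e → b ≠ L.e → ∃ h ∈ innerGroup f, h a = b)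
    (y : S) (hy : y ≠ L.e)
    (hhom : ∀ h k, h ∈ innerGroup f → k ∈ innerGroup f → σ y (h * k) = σ y h * σ y k) :
    ∀ x : S, x ≠ L.e → ∀ h ∈ innerGroup f, σ x h = σ y h := by
  intro x hx h hh
  obtain ⟨k, hk, rfl⟩ := htrans y x hy hx
  have hcocycle := L.sigma_mul σ hσ y h k
  rw [hhom h k hh hk] at hcocycle
  exact (mul_right_cancel hcocycle).symm

/-- If `G_S` acts transitively on `S \ {e}` and `σ_y` is a homomorphism for some
`y ≠ e`, then `σ_x = σ_y` for every `x ≠ e`. -/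
theorem sigma_const {S : Type*} (L : RightLoop S)
    (f : S → S → Equiv.Perm S)
    (hf : ∀ y z x, L.op (f y z x) (L.op y z) = L.op (L.op x y) z)
    (σ : S → Equiv.Perm S → Equiv.Perm S)
    (hσ : ∀ y h x, L.op (σ y h x) (h y) = h (L.op x y))
    (htrans : ∀ a b : S, a ≠ L.e → b ≠ L.e → ∃ h ∈ innerGroup f, h a = b)
    (y : S) (hy : y ≠ L.e)
    (hhom : ∀ h k, h ∈ innerGroup f → k ∈ innerGroup f → σ y (h * k) = σ y h * σ y k) :
    ∀ x : S, x ≠ L.e → ∀ h ∈ innerGroup f, σ x h = σ y h :=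
  sigma_const_general L f σ hσ htrans y hy hhom
end

section
/- Let (S, o) be a right loop with G_S acting transitively on S \ {e}, with f(x', x) = id for all x, and suppose σ_y is a homomorphism for some y ∈ S \ {e}. Then η := σ_y is an involutory automorphism of G_S, i.e., η² = id on G_S. -/
namespace Subgroup

variable {G : Type*} [Group G] {φ : G → G}

theorem map_one_of_map_mul_on {H : Subgroup G}
    (hφ : ∀ a ∈ H, ∀ b ∈ H, φ (a * b) = φ a * φ b) : φ 1 = 1 := by
  have h := hφ 1 H.one_mem 1 H.one_mem
  rw [one_mul] at h
  exact left_eq_mul.mp h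

theorem map_inv_of_map_mul_on {H : Subgroup G}
    (hφ : ∀ a ∈ H, ∀ b ∈ H, φ (a * b) = φ a * φ b) {h : G} (hh : h ∈ H) :
    φ h⁻¹ = (φ h)⁻¹ := by
  apply eq_inv_of_mul_eq_one_left
  rw [← hφ _ (H.inv_mem hh) _ hh, inv_mul_cancel, map_one_of_map_mul_on hφ]

theorem map_mem_closure_of_map_mul_on {s : Set G}
    (hφ : ∀ a ∈ closure s, ∀ b ∈ closure s, φ (a * b) = φ a * φ b)
    (hs : ∀ g ∈ s, φ g ∈ closure s) {h : G} (hh : h ∈ closure s) : φ h ∈ closure s := by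
  induction hh using closure_induction with
  | mem g hg => exact hs g hg
  | one => rw [map_one_of_map_mul_on hφ]; exact one_mem _
  | mul a b ha hb iha ihb => rw [hφ a ha b hb]; exact mul_mem iha ihb
  | inv a ha iha => rw [map_inv_of_map_mul_on hφ ha]; exact inv_mem iha

theorem map_map_of_map_mul_on {s : Set G}
    (hφ : ∀ a ∈ closure s, ∀ b ∈ closure s, φ (a * b) = φ a * φ b)
    (hs : ∀ g ∈ s, φ g ∈ closure s) (hss : ∀ g ∈ s, φ (φ g) = g)
    {h : G} (hh : h ∈ closure s) : φ (φ h) = h := by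
  have hmem {a : G} (ha : a ∈ closure s) := map_mem_closure_of_map_mul_on hφ hs ha
  induction hh using closure_induction with
  | mem g hg => exact hss g hg
  | one => rw [map_one_of_map_mul_on hφ, map_one_of_map_mul_on hφ]
  | mul a b ha hb iha ihb => rw [hφ a ha b hb, hφ _ (hmem ha) _ (hmem hb), iha, ihb]
  | inv a ha iha =>
    rw [map_inv_of_map_mul_on hφ ha, map_inv_of_map_mul_on hφ (hmem ha), iha]

end Subgroup

namespace RightLoop

variable {S : Type*} (L : RightLoop S)

theorem op_left_injective (a : S) : Function.Injective (fun x => L.op x a) := (L.bij a).1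

theorem inv_e {inv : S → S} (hinv : ∀ x, L.op (inv x) x = L.e) : inv L.e = L.e := by
  simpa only [L.op_e] using hinv L.e

theorem inv_ne_e {inv : S → S} (hinv : ∀ x, L.op (inv x) x = L.e) {u : S} (hu : u ≠ L.e) :
    inv u ≠ L.e := by
  intro h
  simpa only [h, L.e_op, hu] using hinv u

variable {L} {f : S → S → Equiv.Perm S} {σ : S → Equiv.Perm S → Equiv.Perm S} {inv : S → S}

theorem innerMap_mem_innerGroup (u v : S) : f u v ∈ innerGroup f :=
  Subgroup.subset_closure ⟨(u, v), rfl⟩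

theorem innerMap_e_left (hf : ∀ y z x, L.op (f y z x) (L.op y z) = L.op (L.op x y) z)
    (v : S) : f L.e v = 1 := by
  ext x
  apply L.op_left_injective v
  simpa only [L.e_op, L.op_e, Equiv.Perm.one_apply] using hf L.e v x

theorem op_innerMap_inv (hf : ∀ y z x, L.op (f y z x) (L.op y z) = L.op (L.op x y) z)
    (hinv : ∀ x, L.op (inv x) x = L.e) (u v : S) :
    L.op (f u v (inv u)) (L.op u v) = v := by
  rw [hf, hinv, L.e_op]

theorem innerMap_innerMap_inv (hf : ∀ y z x, L.op (f y z x) (L.op y z) = L.op (L.op x y) z)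
    (hinv : ∀ x, L.op (inv x) x = L.e) (u v : S) :
    f (f u v (inv u)) (L.op u v) (inv (f u v (inv u))) = u := by
  apply L.op_left_injective v
  have h := hf (f u v (inv u)) (L.op u v) (inv (f u v (inv u)))
  rwa [hinv, L.e_op, op_innerMap_inv hf hinv u v] at h

theorem sigma_one (hσ : ∀ y h x, L.op (σ y h x) (h y) = h (L.op x y)) (b : S) : σ b 1 = 1 := by
  ext x
  apply L.op_left_injective b
  simpa using hσ b 1 x

theorem sigma_mul_s9 (hσ : ∀ y h x, L.op (σ y h x) (h y) = h (L.op x y))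
    (x : S) (h k : Equiv.Perm S) : σ x (k * h) = σ (h x) k * σ x h := by
  ext u
  apply L.op_left_injective (k (h x))
  have hkh := hσ x (k * h) u
  simp only [Equiv.Perm.mul_apply] at hkh ⊢
  rw [hkh, hσ (h x) k, hσ x h u]

theorem innerMap_mul_sigma_innerMap
    (hf : ∀ y z x, L.op (f y z x) (L.op y z) = L.op (L.op x y) z)
    (hσ : ∀ y h x, L.op (σ y h x) (h y) = h (L.op x y)) (u v x : S) :
    f (f u v x) (L.op u v) * σ x (f u v) = f (L.op x u) v * f x u := by
  ext w
  apply L.op_left_injective (L.op (L.op x u) v)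
  simp only [Equiv.Perm.mul_apply]
  calc L.op (f (f u v x) (L.op u v) (σ x (f u v) w)) (L.op (L.op x u) v)
      = L.op (f (f u v x) (L.op u v) (σ x (f u v) w)) (L.op (f u v x) (L.op u v)) := by
        rw [hf u v x]
    _ = L.op (L.op (σ x (f u v) w) (f u v x)) (L.op u v) := hf _ _ _
    _ = L.op (L.op (L.op w x) u) v := by rw [hσ x (f u v) w, hf]
    _ = L.op (L.op (f x u w) (L.op x u)) v := by rw [hf x u w]
    _ = L.op (f (L.op x u) v (f x u w)) (L.op (L.op x u) v) := (hf _ _ _).symm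

theorem sigma_inv_innerMap (hinv : ∀ x, L.op (inv x) x = L.e)
    (hf : ∀ y z x, L.op (f y z x) (L.op y z) = L.op (L.op x y) z) (hff : ∀ x, f (inv x) x = 1)
    (hσ : ∀ y h x, L.op (σ y h x) (h y) = h (L.op x y)) (u v : S) :
    σ (inv u) (f u v) = (f (f u v (inv u)) (L.op u v))⁻¹ := by
  have h := innerMap_mul_sigma_innerMap hf hσ u v (inv u)
  rw [hinv, innerMap_e_left hf, hff, one_mul] at h
  exact eq_inv_of_mul_eq_one_right h

theorem sigma_eq_of_transitive (hσ : ∀ y h x, L.op (σ y h x) (h y) = h (L.op x y))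
    (htrans : ∀ a b : S, a ≠ L.e → b ≠ L.e → ∃ h ∈ innerGroup f, h a = b)
    {y : S} (hy : y ≠ L.e)
    (hhom : ∀ h k, h ∈ innerGroup f → k ∈ innerGroup f → σ y (h * k) = σ y h * σ y k)
    {b : S} (hb : b ≠ L.e) {k : Equiv.Perm S} (hk : k ∈ innerGroup f) : σ b k = σ y k := by
  obtain ⟨h, hh, rfl⟩ := htrans y b hy hb
  have hcocycle := sigma_mul_s9 hσ y h k
  rw [hhom k h hk hh] at hcocycle
  exact (mul_right_cancel hcocycle).symm

theorem sigma_innerMap (hinv : ∀ x, L.op (inv x) x = L.e)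
    (hf : ∀ y z x, L.op (f y z x) (L.op y z) = L.op (L.op x y) z) (hff : ∀ x, f (inv x) x = 1)
    (hσ : ∀ y h x, L.op (σ y h x) (h y) = h (L.op x y))
    (htrans : ∀ a b : S, a ≠ L.e → b ≠ L.e → ∃ h ∈ innerGroup f, h a = b)
    {y : S} (hy : y ≠ L.e)
    (hhom : ∀ h k, h ∈ innerGroup f → k ∈ innerGroup f → σ y (h * k) = σ y h * σ y k)
    (u v : S) : σ y (f u v) = (f (f u v (inv u)) (L.op u v))⁻¹ := by
  by_cases hu : u = L.e
  · subst hu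
    simp only [innerMap_e_left hf, sigma_one hσ, L.inv_e hinv, Equiv.Perm.one_apply, L.e_op,
      inv_one]
  · rw [← sigma_eq_of_transitive hσ htrans hy hhom (L.inv_ne_e hinv hu)
      (innerMap_mem_innerGroup u v)]
    exact sigma_inv_innerMap hinv hf hff hσ u v

end RightLoop

/-- Under transitivity, `f(x', x) = id` and `σ_y` a homomorphism for some `y ≠ e`,
`η := σ_y` is an involutory automorphism of `G_S`. -/
theorem sigma_involutory {S : Type*} (L : RightLoop S)
    (inv : S → S) (hinv : ∀ x, L.op (inv x) x = L.e)
    (f : S → S → Equiv.Perm S)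
    (hf : ∀ y z x, L.op (f y z x) (L.op y z) = L.op (L.op x y) z)
    (hff : ∀ x, f (inv x) x = 1)
    (σ : S → Equiv.Perm S → Equiv.Perm S)
    (hσ : ∀ y h x, L.op (σ y h x) (h y) = h (L.op x y))
    (htrans : ∀ a b : S, a ≠ L.e → b ≠ L.e → ∃ h ∈ innerGroup f, h a = b)
    (y : S) (hy : y ≠ L.e)
    (hhom : ∀ h k, h ∈ innerGroup f → k ∈ innerGroup f → σ y (h * k) = σ y h * σ y k) :
    (∀ h ∈ innerGroup f, σ y h ∈ innerGroup f) ∧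
      (∀ h ∈ innerGroup f, σ y (σ y h) = h) := by
  have hgen := RightLoop.sigma_innerMap hinv hf hff hσ htrans hy hhom
  have hmul : ∀ a ∈ innerGroup f, ∀ b ∈ innerGroup f, σ y (a * b) = σ y a * σ y b :=
    fun a ha b hb => hhom a b ha hb
  have hgen_mem : ∀ g ∈ Set.range (fun p : S × S => f p.1 p.2), σ y g ∈ innerGroup f := by
    rintro _ ⟨⟨u, v⟩, rfl⟩
    rw [hgen]
    exact inv_mem (RightLoop.innerMap_mem_innerGroup _ _)
  refine ⟨fun h hh => Subgroup.map_mem_closure_of_map_mul_on hmul hgen_mem hh,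
    fun h hh => Subgroup.map_map_of_map_mul_on hmul hgen_mem ?_ hh⟩
  rintro _ ⟨⟨u, v⟩, rfl⟩
  rw [hgen, Subgroup.map_inv_of_map_mul_on hmul (RightLoop.innerMap_mem_innerGroup _ _), hgen,
    RightLoop.innerMap_innerMap_inv hf hinv, RightLoop.op_innerMap_inv hf hinv, inv_inv]
end

section
/- Let S be a twisted gyrotransversal to a subgroup H in a group G. Then S with the induced binary operation o (where x·y = g(x,y)(x o y) with g(x,y) ∈ H, x o y ∈ S) is a twisted right gyrogroup; moreover the inverse of x in (S, o) equals x⁻¹ (the group inverse) and g(x', x) = 1 = g(x, x'). -/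
/-!
The product `x ∘ y` is the element of `S` in the right coset `H x y`, so identities in `(S, ∘)`
are identities between right cosets. For the right inner mapping of `(y, z)`, put `h = g(y, z)`
and `k = η h`: the map `x ↦ k⁻¹ x h` (with `1 ↦ 1`, since `k⁻¹ h` need not lie in `S`) takes `S`
into `S` and `x` into `H x h`, hence `f x ∘ (y ∘ z) = (x ∘ y) ∘ z`; and
`(k⁻¹ x⁻¹ h)⁻¹ (k⁻¹ w h) = h⁻¹ x w h` shows that it is a twisted automorphism.
-/

section RightCosetEquivalence

variable {α : Type*} [Mul α] (s : Set α)

@[refl]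
theorem rightCosetEquivalence_refl (a : α) : RightCosetEquivalence s a a :=
  rfl

instance : IsTrans α (RightCosetEquivalence s) :=
  ⟨fun _ _ _ => Eq.trans⟩

end RightCosetEquivalence

section RightCosets

variable {G : Type*} [Group G] {H : Subgroup G} {a b c : G}

theorem rightCosetEquivalence_iff :
    RightCosetEquivalence (H : Set G) a b ↔ b * a⁻¹ ∈ H :=
  rightCoset_eq_iff H

theorem rightCosetEquivalence_mul_right_iff :
    RightCosetEquivalence (H : Set G) (a * c) (b * c) ↔ RightCosetEquivalence (H : Set G) a b := by
  simp only [rightCosetEquivalence_iff, mul_inv_rev, mul_assoc, mul_inv_cancel_left]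

theorem rightCosetEquivalence_mul_left_of_mem (ha : a ∈ H) :
    RightCosetEquivalence (H : Set G) (a * b) b := by
  rw [rightCosetEquivalence_iff, mul_inv_rev, mul_inv_cancel_left]
  exact H.inv_mem ha

end RightCosets

section Transversal

variable {G : Type*} [Group G] {H : Subgroup G} {S : Set G}

def IsRightTransversal (H : Subgroup G) (S : Set G) : Prop :=
  ∀ g : G, ∃! s, s ∈ S ∧ g * s⁻¹ ∈ H

theorem IsRightTransversal.exists_rightCosetEquivalence (hS : IsRightTransversal H S) (g : G) :
    ∃ s ∈ S, RightCosetEquivalence (H : Set G) s g := by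
  obtain ⟨s, ⟨hs, hgs⟩, -⟩ := hS g
  exact ⟨s, hs, rightCosetEquivalence_iff.2 hgs⟩

theorem IsRightTransversal.eq_of_rightCosetEquivalence (hS : IsRightTransversal H S) {s t : G}
    (hs : s ∈ S) (ht : t ∈ S) (h : RightCosetEquivalence (H : Set G) s t) : s = t :=
  (hS t).unique ⟨hs, rightCosetEquivalence_iff.1 h⟩ ⟨ht, by simp⟩

open Classical in
noncomputable def twistedConj (k h x : G) : G :=
  if x = 1 then 1 else k⁻¹ * x * h

section TwistedConj

variable {k h x : G}

@[simp]
theorem twistedConj_one (k h : G) : twistedConj k h 1 = 1 := if_pos rfl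

theorem twistedConj_of_ne_one (hx : x ≠ 1) : twistedConj k h x = k⁻¹ * x * h := if_neg hx

theorem twistedConj_mem (hS1 : (1 : G) ∈ S) (hkh : ∀ x ∈ S, x ≠ 1 → k⁻¹ * x * h ∈ S)
    (hx : x ∈ S) : twistedConj k h x ∈ S := by
  by_cases hx1 : x = 1
  · rwa [hx1, twistedConj_one]
  · rw [twistedConj_of_ne_one hx1]
    exact hkh x hx hx1

theorem rightCosetEquivalence_twistedConj (hk : k ∈ H) (hh : h ∈ H) (x : G) :
    RightCosetEquivalence (H : Set G) (twistedConj k h x) (x * h) := by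
  by_cases hx1 : x = 1
  · rw [hx1, twistedConj_one, one_mul, rightCosetEquivalence_iff, inv_one, mul_one]
    exact hh
  · rw [twistedConj_of_ne_one hx1, mul_assoc]
    exact rightCosetEquivalence_mul_left_of_mem (H.inv_mem hk)

theorem rightCosetEquivalence_inv_twistedConj_inv_mul (hk : k ∈ H) (hh : h ∈ H) {w : G}
    (hw : w ≠ 1) : RightCosetEquivalence (H : Set G)
      ((twistedConj k h x⁻¹)⁻¹ * twistedConj k h w) (x * w * h) := by
  rw [twistedConj_of_ne_one hw]
  by_cases hx1 : x = 1
  · rw [hx1, inv_one, twistedConj_one, inv_one, one_mul, one_mul, mul_assoc]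
    exact rightCosetEquivalence_mul_left_of_mem (H.inv_mem hk)
  · rw [twistedConj_of_ne_one (inv_ne_one.2 hx1)]
    have : (k⁻¹ * x⁻¹ * h)⁻¹ * (k⁻¹ * w * h) = h⁻¹ * (x * w * h) := by group
    rw [this]
    exact rightCosetEquivalence_mul_left_of_mem (H.inv_mem hh)

end TwistedConj

def IsTransversalDecomposition (H : Subgroup G) (S : Set G) (gm op : G → G → G) : Prop :=
  ∀ x ∈ S, ∀ y ∈ S, gm x y ∈ H ∧ op x y ∈ S ∧ x * y = gm x y * op x y

namespace IsTransversalDecomposition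

variable {gm op : G → G → G} {x y z s : G}

theorem op_mem (hd : IsTransversalDecomposition H S gm op) (hx : x ∈ S) (hy : y ∈ S) :
    op x y ∈ S :=
  (hd x hx y hy).2.1

theorem gm_mem (hd : IsTransversalDecomposition H S gm op) (hx : x ∈ S) (hy : y ∈ S) :
    gm x y ∈ H :=
  (hd x hx y hy).1

theorem mul_eq_gm_mul_op (hd : IsTransversalDecomposition H S gm op) (hx : x ∈ S) (hy : y ∈ S) :
    x * y = gm x y * op x y :=
  (hd x hx y hy).2.2

theorem gm_eq (hd : IsTransversalDecomposition H S gm op) (hx : x ∈ S) (hy : y ∈ S) :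
    gm x y = x * y * (op x y)⁻¹ := by
  rw [hd.mul_eq_gm_mul_op hx hy, mul_inv_cancel_right]

theorem rightCosetEquivalence_op (hd : IsTransversalDecomposition H S gm op) (hx : x ∈ S)
    (hy : y ∈ S) : RightCosetEquivalence (H : Set G) (op x y) (x * y) := by
  rw [rightCosetEquivalence_iff, ← hd.gm_eq hx hy]
  exact hd.gm_mem hx hy

theorem op_eq_of_rightCosetEquivalence (hd : IsTransversalDecomposition H S gm op)
    (hS : IsRightTransversal H S) (hx : x ∈ S) (hy : y ∈ S) (hs : s ∈ S)
    (h : RightCosetEquivalence (H : Set G) s (x * y)) : op x y = s :=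
  hS.eq_of_rightCosetEquivalence (hd.op_mem hx hy) hs
    (Eq.trans (hd.rightCosetEquivalence_op hx hy) (Eq.symm h))

theorem op_one_right (hd : IsTransversalDecomposition H S gm op) (hS : IsRightTransversal H S)
    (hS1 : (1 : G) ∈ S) (hx : x ∈ S) : op x 1 = x :=
  hd.op_eq_of_rightCosetEquivalence hS hx hS1 hx (by rw [mul_one])

theorem op_one_left (hd : IsTransversalDecomposition H S gm op) (hS : IsRightTransversal H S)
    (hS1 : (1 : G) ∈ S) (hx : x ∈ S) : op 1 x = x :=
  hd.op_eq_of_rightCosetEquivalence hS hS1 hx hx (by rw [one_mul])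

theorem op_inv_left (hd : IsTransversalDecomposition H S gm op) (hS : IsRightTransversal H S)
    (hS1 : (1 : G) ∈ S) (hx : x ∈ S) (hx' : x⁻¹ ∈ S) : op x⁻¹ x = 1 :=
  hd.op_eq_of_rightCosetEquivalence hS hx' hx hS1 (by rw [inv_mul_cancel])

theorem op_inv_right (hd : IsTransversalDecomposition H S gm op) (hS : IsRightTransversal H S)
    (hS1 : (1 : G) ∈ S) (hx : x ∈ S) (hx' : x⁻¹ ∈ S) : op x x⁻¹ = 1 :=
  hd.op_eq_of_rightCosetEquivalence hS hx hx' hS1 (by rw [mul_inv_cancel])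

theorem gm_inv_left (hd : IsTransversalDecomposition H S gm op) (hS : IsRightTransversal H S)
    (hS1 : (1 : G) ∈ S) (hx : x ∈ S) (hx' : x⁻¹ ∈ S) : gm x⁻¹ x = 1 := by
  rw [hd.gm_eq hx' hx, hd.op_inv_left hS hS1 hx hx', inv_one, mul_one, inv_mul_cancel]

theorem gm_inv_right (hd : IsTransversalDecomposition H S gm op) (hS : IsRightTransversal H S)
    (hS1 : (1 : G) ∈ S) (hx : x ∈ S) (hx' : x⁻¹ ∈ S) : gm x x⁻¹ = 1 := by
  rw [hd.gm_eq hx hx', hd.op_inv_right hS hS1 hx hx', inv_one, mul_one, mul_inv_cancel]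

theorem op_left_injective (hd : IsTransversalDecomposition H S gm op)
    (hS : IsRightTransversal H S) (hx : x ∈ S) (hs : s ∈ S) (hy : y ∈ S)
    (h : op x y = op s y) : x = s := by
  refine hS.eq_of_rightCosetEquivalence hx hs
    ((rightCosetEquivalence_mul_right_iff (c := y)).1 ?_)
  exact Eq.trans (Eq.symm (hd.rightCosetEquivalence_op hx hy))
    (h ▸ hd.rightCosetEquivalence_op hs hy)

theorem existsUnique_op_eq (hd : IsTransversalDecomposition H S gm op)
    (hS : IsRightTransversal H S) {a b : G} (ha : a ∈ S) (hb : b ∈ S) :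
    ∃! x, x ∈ S ∧ op x a = b := by
  obtain ⟨s, hs, hsb⟩ := hS.exists_rightCosetEquivalence (b * a⁻¹)
  have hsa : op s a = b := by
    refine hd.op_eq_of_rightCosetEquivalence hS hs ha hb ?_
    have := (rightCosetEquivalence_mul_right_iff (c := a)).2 hsb
    rw [inv_mul_cancel_right] at this
    exact Eq.symm this
  exact ⟨s, ⟨hs, hsa⟩, fun x ⟨hx, hxa⟩ => hd.op_left_injective hS hx hs ha (hxa.trans hsa.symm)⟩

theorem op_op_inv_cancel_right (hd : IsTransversalDecomposition H S gm op)
    (hS : IsRightTransversal H S) (hx : x ∈ S) (hy : y ∈ S) (hy' : y⁻¹ ∈ S) :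
    op (op x y⁻¹) y = x := by
  refine hd.op_eq_of_rightCosetEquivalence hS (hd.op_mem hx hy') hy hx ?_
  have := (rightCosetEquivalence_mul_right_iff (c := y)).2 (hd.rightCosetEquivalence_op hx hy')
  rw [inv_mul_cancel_right] at this
  exact Eq.symm this

theorem op_op_eq_op_op_of_rightCosetEquivalence (hd : IsTransversalDecomposition H S gm op)
    (hS : IsRightTransversal H S) (hx : x ∈ S) (hy : y ∈ S) (hz : z ∈ S) (hs : s ∈ S)
    (h : RightCosetEquivalence (H : Set G) s (x * gm y z)) :
    op s (op y z) = op (op x y) z := by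
  refine hd.op_eq_of_rightCosetEquivalence hS hs (hd.op_mem hy hz)
    (hd.op_mem (hd.op_mem hx hy) hz) ?_
  calc RightCosetEquivalence (H : Set G) (op (op x y) z) (op x y * z) :=
        hd.rightCosetEquivalence_op (hd.op_mem hx hy) hz
    RightCosetEquivalence (H : Set G) _ (x * y * z) :=
        rightCosetEquivalence_mul_right_iff.2 (hd.rightCosetEquivalence_op hx hy)
    RightCosetEquivalence (H : Set G) _ (x * gm y z * op y z) := by
        rw [mul_assoc, mul_assoc, ← hd.mul_eq_gm_mul_op hy hz]
    RightCosetEquivalence (H : Set G) _ (s * op y z) :=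
        rightCosetEquivalence_mul_right_iff.2 (Eq.symm h)

theorem twistedConj_op (hd : IsTransversalDecomposition H S gm op) (hS : IsRightTransversal H S)
    (hS1 : (1 : G) ∈ S) (hSinv : ∀ x ∈ S, x⁻¹ ∈ S) {k h : G} (hk : k ∈ H) (hh : h ∈ H)
    (hkh : ∀ x ∈ S, x ≠ 1 → k⁻¹ * x * h ∈ S) {w : G} (hx : x ∈ S) (hw : w ∈ S) (hw1 : w ≠ 1) :
    twistedConj k h (op x w) = op (twistedConj k h x⁻¹)⁻¹ (twistedConj k h w) := by
  have hf : ∀ {x}, x ∈ S → twistedConj k h x ∈ S := twistedConj_mem hS1 hkh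
  refine Eq.symm (hd.op_eq_of_rightCosetEquivalence hS (hSinv _ (hf (hSinv x hx))) (hf hw)
    (hf (hd.op_mem hx hw)) ?_)
  calc RightCosetEquivalence (H : Set G) (twistedConj k h (op x w)) (op x w * h) :=
        rightCosetEquivalence_twistedConj hk hh _
    RightCosetEquivalence (H : Set G) _ (x * w * h) :=
        rightCosetEquivalence_mul_right_iff.2 (hd.rightCosetEquivalence_op hx hw)
    RightCosetEquivalence (H : Set G) _ ((twistedConj k h x⁻¹)⁻¹ * twistedConj k h w) :=
        Eq.symm (rightCosetEquivalence_inv_twistedConj_inv_mul hk hh hw1)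

end IsTransversalDecomposition

end Transversal

theorem twisted_gyrotransversal_induces_twisted_right_gyrogroup_general
    {G : Type*} [Group G] (H : Subgroup G) (S : Set G)
    (hS1 : (1 : G) ∈ S)
    (htrans : ∀ g : G, ∃! s, s ∈ S ∧ g * s⁻¹ ∈ H)
    (gm : G → G → G) (op : G → G → G)
    (hdec : ∀ x ∈ S, ∀ y ∈ S, gm x y ∈ H ∧ op x y ∈ S ∧ x * y = gm x y * op x y)
    (hSinv : ∀ x ∈ S, x⁻¹ ∈ S)
    (η : H →* H)
    (hηS : ∀ x ∈ S, x ≠ 1 → ∀ h : H, ((η h : G))⁻¹ * x * (h : G) ∈ S) :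
    -- (S, o) is a right loop with identity 1
    (∀ x ∈ S, op x 1 = x ∧ op 1 x = x) ∧
    (∀ a ∈ S, ∀ b ∈ S, ∃! x, x ∈ S ∧ op x a = b) ∧
    -- the inverse of x in (S, o) is x⁻¹
    (∀ x ∈ S, op x⁻¹ x = 1 ∧ op x x⁻¹ = 1) ∧
    (∀ x ∈ S, gm x⁻¹ x = 1 ∧ gm x x⁻¹ = 1) ∧
    -- f(y', y) = id
    (∀ x ∈ S, ∀ y ∈ S, op (op x y⁻¹) y = x) ∧
    -- every right inner mapping is a twisted automorphism
    (∀ y ∈ S, ∀ z ∈ S, ∃ f : G → G,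
      (∀ x ∈ S, f x ∈ S ∧ op (f x) (op y z) = op (op x y) z) ∧
      (∀ x ∈ S, ∀ w ∈ S, w ≠ 1 → f (op x w) = op (f x⁻¹)⁻¹ (f w))) := by
  have hS : IsRightTransversal H S := htrans
  have hd : IsTransversalDecomposition H S gm op := hdec
  refine ⟨fun x hx => ⟨hd.op_one_right hS hS1 hx, hd.op_one_left hS hS1 hx⟩,
    fun a ha b hb => hd.existsUnique_op_eq hS ha hb,
    fun x hx => ⟨hd.op_inv_left hS hS1 hx (hSinv x hx), hd.op_inv_right hS hS1 hx (hSinv x hx)⟩,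
    fun x hx => ⟨hd.gm_inv_left hS hS1 hx (hSinv x hx), hd.gm_inv_right hS hS1 hx (hSinv x hx)⟩,
    fun x hx y hy => hd.op_op_inv_cancel_right hS hx hy (hSinv y hy),
    fun y hy z hz => ?_⟩
  let h : H := ⟨gm y z, hd.gm_mem hy hz⟩
  have hkh : ∀ x ∈ S, x ≠ 1 → ((η h : G))⁻¹ * x * h ∈ S := fun x hx hx1 => hηS x hx hx1 h
  refine ⟨twistedConj (η h) h, fun x hx => ⟨twistedConj_mem hS1 hkh hx, ?_⟩,
    fun x hx w hw hw1 => hd.twistedConj_op hS hS1 hSinv (η h).2 h.2 hkh hx hw hw1⟩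
  exact hd.op_op_eq_op_op_of_rightCosetEquivalence hS hx hy hz (twistedConj_mem hS1 hkh hx)
    (rightCosetEquivalence_twistedConj (η h).2 h.2 x)

/-- A twisted gyrotransversal `S` to a subgroup `H` of a group `G` induces a
twisted right gyrogroup structure on `S`; moreover the inverse of `x` in `(S, o)`
is the group inverse `x⁻¹`, and `g(x⁻¹, x) = 1 = g(x, x⁻¹)`. -/
theorem twisted_gyrotransversal_induces_twisted_right_gyrogroup
    {G : Type*} [Group G] (H : Subgroup G) (S : Set G)
    (hS1 : (1 : G) ∈ S)
    (htrans : ∀ g : G, ∃! s, s ∈ S ∧ g * s⁻¹ ∈ H)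
    (gm : G → G → G) (op : G → G → G)
    (hdec : ∀ x ∈ S, ∀ y ∈ S, gm x y ∈ H ∧ op x y ∈ S ∧ x * y = gm x y * op x y)
    (hSinv : ∀ x ∈ S, x⁻¹ ∈ S)
    (η : H →* H) (hη2 : ∀ h, η (η h) = h)
    (hηS : ∀ x ∈ S, x ≠ 1 → ∀ h : H, ((η h : G))⁻¹ * x * (h : G) ∈ S) :
    -- (S, o) is a right loop with identity 1
    (∀ x ∈ S, op x 1 = x ∧ op 1 x = x) ∧
    (∀ a ∈ S, ∀ b ∈ S, ∃! x, x ∈ S ∧ op x a = b) ∧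
    -- the inverse of x in (S, o) is x⁻¹
    (∀ x ∈ S, op x⁻¹ x = 1 ∧ op x x⁻¹ = 1) ∧
    (∀ x ∈ S, gm x⁻¹ x = 1 ∧ gm x x⁻¹ = 1) ∧
    -- f(y', y) = id
    (∀ x ∈ S, ∀ y ∈ S, op (op x y⁻¹) y = x) ∧
    -- every right inner mapping is a twisted automorphism
    (∀ y ∈ S, ∀ z ∈ S, ∃ f : G → G,
      (∀ x ∈ S, f x ∈ S ∧ op (f x) (op y z) = op (op x y) z) ∧
      (∀ x ∈ S, ∀ w ∈ S, w ≠ 1 → f (op x w) = op (f x⁻¹)⁻¹ (f w))) :=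
  twisted_gyrotransversal_induces_twisted_right_gyrogroup_general H S hS1 htrans gm op hdec hSinv η
    hηS
end

section
/- A twisted right gyrogroup (S, o) is a twisted gyrogroup if and only if, in the associated group G_S S (in which x·y = f(x,y)·(x o y) for x, y ∈ S), the subset S is a twisted subgroup (i.e., 1 ∈ S and x, y ∈ S imply xyx ∈ S) with f(x, y)⁻¹ = f(y, x) for all x, y ∈ S; in that case xyx = (x o y) o x for x, y ∈ S. -/
theorem mem_innerGroup {S : Type*} (f : S → S → Equiv.Perm S) (a b : S) :
    f a b ∈ innerGroup f :=
  Subgroup.subset_closure ⟨(a, b), rfl⟩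

def IsTwistedGyrogroup {S : Type*} (L : RightLoop S) (f : S → S → Equiv.Perm S) : Prop :=
  ∀ x y, f x y = f x (L.op x y)

/-- An axiomatization of `G_S S`: `ψ` embeds the inner mapping group anti-homomorphically as `H`,
and `ι` embeds `S` as a transversal to `H` on which `x y = f(x,y) (x o y)`. -/
structure IsTransversalRealization {S : Type*} (L : RightLoop S) (f : S → S → Equiv.Perm S)
    {G : Type*} [Group G] (ι : S → G) (ψ : Equiv.Perm S → G) : Prop where
  map_mul : ∀ h k : Equiv.Perm S, ψ (h * k) = ψ k * ψ h
  unique : ∀ h ∈ innerGroup f, ∀ h' ∈ innerGroup f, ∀ s s' : S,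
    ψ h * ι s = ψ h' * ι s' → h = h' ∧ s = s'
  mul_eq : ∀ x y : S, ι x * ι y = ψ (f x y) * ι (L.op x y)

namespace IsTransversalRealization

variable {S : Type*} {L : RightLoop S} {f : S → S → Equiv.Perm S} {G : Type*} [Group G]
  {ι : S → G} {ψ : Equiv.Perm S → G} {inv : S → S}

theorem map_one (R : IsTransversalRealization L f ι ψ) : ψ 1 = 1 :=
  mul_eq_left.mp (by rw [← R.map_mul, one_mul] : ψ 1 * ψ 1 = ψ 1)

theorem map_inv (R : IsTransversalRealization L f ι ψ) (h : Equiv.Perm S) :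
    ψ h⁻¹ = (ψ h)⁻¹ :=
  eq_inv_of_mul_eq_one_left (by rw [← R.map_mul, mul_inv_cancel, R.map_one])

theorem eq_of_mul_eq (R : IsTransversalRealization L f ι ψ) {x y s : S} {h : Equiv.Perm S}
    (hh : h ∈ innerGroup f) (heq : ι x * ι y = ψ h * ι s) : f x y = h ∧ L.op x y = s :=
  R.unique _ (mem_innerGroup f x y) _ hh _ _ (by rw [← R.mul_eq, heq])

theorem iota_inv (R : IsTransversalRealization L f ι ψ) (hinv : ∀ x, L.op (inv x) x = L.e)
    (hff : ∀ y, f (inv y) y = 1) (y : S) :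
    ι (inv y) = (ι y)⁻¹ := by
  have hinv_e : inv L.e = L.e := by simpa only [L.op_e] using hinv L.e
  have hι_e : ι L.e = 1 := by
    have h := R.mul_eq (inv L.e) L.e
    rw [hff, R.map_one, one_mul, hinv, hinv_e] at h
    exact mul_eq_left.mp h
  apply eq_inv_of_mul_eq_one_left
  rw [R.mul_eq, hff, R.map_one, hinv, hι_e, one_mul]

theorem mul_mul_self_eq (R : IsTransversalRealization L f ι ψ) (x y : S) :
    ι x * ι y * ι x = ψ (f (L.op x y) x * f x y) * ι (L.op (L.op x y) x) := by
  rw [R.mul_eq x y, mul_assoc, R.mul_eq, ← mul_assoc, R.map_mul]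

theorem f_op_left_eq_inv (R : IsTransversalRealization L f ι ψ)
    (hι : ∀ y, ι (inv y) = (ι y)⁻¹) (hL : IsTwistedGyrogroup L f) (x y : S) :
    f (L.op x y) x = (f x y)⁻¹ := by
  have hdec : ι (L.op x y) * ι (inv y) = ψ (f x y)⁻¹ * ι x := by
    rw [hι, R.map_inv, eq_inv_mul_of_mul_eq (R.mul_eq x y).symm]
    group
  obtain ⟨hf, hop⟩ := R.eq_of_mul_eq (inv_mem (mem_innerGroup f x y)) hdec
  calc f (L.op x y) x = f (L.op x y) (L.op (L.op x y) (inv y)) := by rw [hop]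
    _ = (f x y)⁻¹ := by rw [← hL, hf]

theorem mul_mul_self_eq_of_isTwistedGyrogroup (R : IsTransversalRealization L f ι ψ)
    (hι : ∀ y, ι (inv y) = (ι y)⁻¹) (hL : IsTwistedGyrogroup L f) (x y : S) :
    ι x * ι y * ι x = ι (L.op (L.op x y) x) := by
  rw [R.mul_mul_self_eq, R.f_op_left_eq_inv hι hL, inv_mul_cancel, R.map_one, one_mul]

theorem exists_op_eq_and_f_eq (R : IsTransversalRealization L f ι ψ)
    (hL : IsTwistedGyrogroup L f) (p q : S) : ∃ z, L.op p z = q ∧ f p z = f p q := by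
  obtain ⟨s, hs : L.op s (L.op p q) = q⟩ := (L.bij (L.op p q)).2 q
  -- the twisted gyrogroup condition at `(s, p o q)` gives `f(s, p o q) = f(s, q)`
  have hs_pq : ι s * ι (L.op p q) = ψ (f s q) * ι q := by
    rw [R.mul_eq, hL s (L.op p q), hs]
  have hdec : ι p * ι (L.op s q) = ψ (f p q) * ι q := by
    rw [eq_inv_mul_of_mul_eq (R.mul_eq s q).symm, eq_mul_inv_of_mul_eq hs_pq.symm,
      eq_mul_inv_of_mul_eq (R.mul_eq p q).symm]
    group
  obtain ⟨hf, hop⟩ := R.eq_of_mul_eq (mem_innerGroup f p q) hdec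
  exact ⟨_, hop, hf⟩

theorem inv_f_eq_f_swap (R : IsTransversalRealization L f ι ψ)
    (hι : ∀ y, ι (inv y) = (ι y)⁻¹) (hL : IsTwistedGyrogroup L f) (x y : S) :
    (f x y)⁻¹ = f y x := by
  obtain ⟨z, hz, hfz⟩ := R.exists_op_eq_and_f_eq hL y x
  have h := R.f_op_left_eq_inv hι hL y z
  rw [hz, hfz] at h
  rw [h, inv_inv]

theorem isTwistedGyrogroup (R : IsTransversalRealization L f ι ψ)
    (htw : ∀ x y, ∃ z, ι x * ι y * ι x = ι z) (hswap : ∀ x y, (f x y)⁻¹ = f y x) :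
    IsTwistedGyrogroup L f := by
  intro x y
  obtain ⟨z, hz⟩ := htw x y
  have hdec : ψ (f (L.op x y) x * f x y) * ι (L.op (L.op x y) x) = ψ 1 * ι z := by
    rw [← R.mul_mul_self_eq, hz, R.map_one, one_mul]
  have h1 := (R.unique _ (mul_mem (mem_innerGroup f _ _) (mem_innerGroup f x y)) _
    (one_mem _) _ _ hdec).1
  have h2 := hswap x (L.op x y)
  rw [eq_inv_of_mul_eq_one_left h1] at h2
  exact (inv_injective h2).symm

end IsTransversalRealization

theorem twisted_gyrogroup_iff_twisted_subgroup_general {S : Type*} (L : RightLoop S)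
    (inv : S → S) (hinv : ∀ x, L.op (inv x) x = L.e)
    (f : S → S → Equiv.Perm S)
    (hff : ∀ y, f (inv y) y = 1)
    {G : Type*} [Group G] (ι : S → G) (ψ : Equiv.Perm S → G)
    (hψmul : ∀ h k : Equiv.Perm S, ψ (h * k) = ψ k * ψ h)
    (huniq : ∀ h ∈ innerGroup f, ∀ h' ∈ innerGroup f, ∀ s s' : S,
      ψ h * ι s = ψ h' * ι s' → h = h' ∧ s = s')
    (hrel : ∀ x y : S, ι x * ι y = ψ (f x y) * ι (L.op x y)) :
    ((∀ x y : S, f x y = f x (L.op x y)) ↔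
      ((∀ x y : S, ∃ z : S, ι x * ι y * ι x = ι z) ∧
        (∀ x y : S, (f x y)⁻¹ = f y x))) ∧
    ((∀ x y : S, f x y = f x (L.op x y)) →
      ∀ x y : S, ι x * ι y * ι x = ι (L.op (L.op x y) x)) := by
  have R : IsTransversalRealization L f ι ψ := ⟨hψmul, huniq, hrel⟩
  have hι := R.iota_inv hinv hff
  refine ⟨⟨fun hL => ⟨fun x y => ⟨_, R.mul_mul_self_eq_of_isTwistedGyrogroup hι hL x y⟩,
    R.inv_f_eq_f_swap hι hL⟩, fun ⟨htw, hswap⟩ => R.isTwistedGyrogroup htw hswap⟩,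
    R.mul_mul_self_eq_of_isTwistedGyrogroup hι⟩

/-- A twisted right gyrogroup `(S, o)` is a twisted gyrogroup (i.e. satisfies the right
loop property `f(x,y) = f(x, x o y)`) if and only if, in the associated group `G_S S`
(here axiomatized: `ι : S → G`, `ψ` an embedding of the inner mappings with
`ι x * ι y = ψ (f x y) * ι (x o y)` and unique `H`-`S` decompositions), the subset
`S` is a twisted subgroup with `f(x,y)⁻¹ = f(y,x)`; in that case
`x y x = (x o y) o x` in the group. -/
theorem twisted_gyrogroup_iff_twisted_subgroup {S : Type*} (L : RightLoop S)
    (inv : S → S) (hinv : ∀ x, L.op (inv x) x = L.e)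
    (f : S → S → Equiv.Perm S)
    (hf : ∀ y z x, L.op (f y z x) (L.op y z) = L.op (L.op x y) z)
    (hff : ∀ y, f (inv y) y = 1)
    (htw : ∀ y z x w, w ≠ L.e →
      f y z (L.op x w) = L.op (inv (f y z (inv x))) (f y z w))
    {G : Type*} [Group G] (ι : S → G) (ψ : Equiv.Perm S → G)
    (hψmul : ∀ h k : Equiv.Perm S, ψ (h * k) = ψ k * ψ h)
    (hψ1 : ψ 1 = 1) (hι1 : ι L.e = 1)
    (huniq : ∀ h ∈ innerGroup f, ∀ h' ∈ innerGroup f, ∀ s s' : S,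
      ψ h * ι s = ψ h' * ι s' → h = h' ∧ s = s')
    (hrel : ∀ x y : S, ι x * ι y = ψ (f x y) * ι (L.op x y)) :
    ((∀ x y : S, f x y = f x (L.op x y)) ↔
      ((∀ x y : S, ∃ z : S, ι x * ι y * ι x = ι z) ∧
        (∀ x y : S, (f x y)⁻¹ = f y x))) ∧
    ((∀ x y : S, f x y = f x (L.op x y)) →
      ∀ x y : S, ι x * ι y * ι x = ι (L.op (L.op x y) x)) :=
  twisted_gyrogroup_iff_twisted_subgroup_general L inv hinv f hff ι ψ hψmul huniq hrel
end
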